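/- arXiv:1701.07645 — 3 statements merged into one kernel-verified Lean document; each statement's English description precedes it below -/
import Mathlib

section
/- Let H = (h_{ij})_{i,j∈[n]} be a symmetric partial matrix in which each off-diagonal entry h_{ij} is either a defined value in ℝ ∪ {+∞} or undefined, and assume that h_{ij} ≥ 0 for all defined entries and h_{ij} ≥ min{h_{jk}, h_{ik}} whenever h_{ij}, h_{jk}, h_{ik} are all defined (for distinct i, j, k). Then H is M♮-convex completable if and only if for every chordless cycle C of the assignment graph G_H, the minimum of the edge weights on C is attained by at least two edges of C, i.e., |argmin_{e∈C} w(e)| ≥ 2. -/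
open Finset

/-- M♮-convexity for functions on `{0,1}^n` (identified with finite subsets of the index
set) with values in `ℝ ∪ {+∞}`. -/
def MnatConvex {ι : Type*} [DecidableEq ι] (f : Finset ι → WithTop ℝ) : Prop :=
  ∀ X Y : Finset ι, ∀ i ∈ X \ Y,
    (f (X.erase i) + f (insert i Y) ≤ f X + f Y) ∨
    (∃ j ∈ Y \ X, f (insert j (X.erase i)) + f ((insert i Y).erase j) ≤ f X + f Y)

/-- The quadratic function `x ↦ Σ_i h_i x_i + Σ_{i<j} h_{ij} x_i x_j` on `{0,1}^n`. -/
def quadF {n : ℕ} (h : Fin n → ℝ) (H : Fin n → Fin n → WithTop ℝ)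
    (S : Finset (Fin n)) : WithTop ℝ :=
  (∑ i ∈ S, (h i : WithTop ℝ)) + ∑ p ∈ (S ×ˢ S).filter (fun p => p.1 < p.2), H p.1 p.2

/-- A symmetric partial matrix (`none` = undefined entry) is M♮-convex completable if values
in `ℝ ∪ {+∞}` can be assigned to the undefined entries (keeping symmetry) so that for some
finite linear coefficients the resulting quadratic function on `{0,1}^n` is M♮-convex. -/
def Completable {n : ℕ} (H : Fin n → Fin n → Option (WithTop ℝ)) : Prop :=
  ∃ H' : Fin n → Fin n → WithTop ℝ,
    (∀ i j : Fin n, H' i j = H' j i) ∧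
    (∀ i j : Fin n, ∀ a : WithTop ℝ, i ≠ j → H i j = some a → H' i j = a) ∧
    (∃ h : Fin n → ℝ, MnatConvex (quadF h H'))

/-- A cycle of length `m ≥ 3`: distinct vertices, cyclically consecutive ones adjacent. -/
def IsCycle {ι : Type*} (Adj : ι → ι → Prop) (m : ℕ) (v : ZMod m → ι) : Prop :=
  3 ≤ m ∧ Function.Injective v ∧ ∀ p : ZMod m, Adj (v p) (v (p + 1))

/-- The cycle `v` is chordless: no two non-consecutive vertices of it are adjacent. -/
def IsChordless {ι : Type*} (Adj : ι → ι → Prop) (m : ℕ) (v : ZMod m → ι) : Prop :=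
  ∀ p q : ZMod m, q ≠ p → q ≠ p + 1 → p ≠ q + 1 → ¬ Adj (v p) (v q)

/-- The minimum of a family of values in `ℝ ∪ {+∞}` is attained at least twice. -/
def MinTwice {κ : Type*} (w : κ → WithTop ℝ) : Prop :=
  ∃ p q : κ, p ≠ q ∧ (∀ t, w p ≤ w t) ∧ w p = w q

/-!
For an anti-ultrametric matrix `A` (every triangle attains its minimum twice), the relation
`x = y ∨ θ ≤ A x y` is an equivalence for every threshold `θ`, and its classes refine as `θ` grows.

M♮-convexity of the quadratic function, tested on `X = {i, j}`, `Y = {k}`, forces the completed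
matrix to be anti-ultrametric; on a cycle whose minimum were attained only once, the remaining
edges would link the ends of the minimal edge above its weight, which is impossible.

Conversely, under the cycle condition the bottleneck (maximin walk) values complete `H`. They are
anti-ultrametric, and they agree with `H`: a shortest walk beating an edge would close up, with that
edge, into a chordless cycle with a unique minimum. A nonnegative anti-ultrametric matrix gives an
M♮-convex quadratic function: sums are compared threshold by threshold, and the exchange partner of
`i` is found by descending from the highest level at which the class of `i` holds more of `Y` than
of `X` through ever finer classes with the same property.
-/

namespace Multiset

variable {M : Type*} [AddCommMonoid M] [LinearOrder M] [IsOrderedAddMonoid M]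

theorem sum_le_sum_of_card_filter_le {L R : Multiset M} (hR : ∀ r ∈ R, 0 ≤ r)
    (hcount : ∀ θ, card (L.filter (θ ≤ ·)) ≤ card (R.filter (θ ≤ ·))) : L.sum ≤ R.sum := by
  induction hn : card L generalizing L R with
  | zero => rw [card_eq_zero.1 hn, sum_zero]; exact sum_nonneg hR
  | succ k ih =>
    have hL : L.toFinset.Nonempty := by
      rw [toFinset_nonempty, ← card_pos]; omega
    set m := L.toFinset.max' hL
    have hmL : m ∈ L := mem_toFinset.1 (L.toFinset.max'_mem hL)
    have hmax : ∀ x ∈ L, x ≤ m := fun x hx => L.toFinset.le_max' x (mem_toFinset.2 hx)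
    obtain ⟨r, hr⟩ : ∃ r, r ∈ R.filter (m ≤ ·) := by
      have hm : 0 < card (L.filter (m ≤ ·)) :=
        card_pos_iff_exists_mem.2 ⟨m, mem_filter.2 ⟨hmL, le_rfl⟩⟩
      exact card_pos_iff_exists_mem.1 (hm.trans_le (hcount m))
    obtain ⟨hrR, hmr⟩ := mem_filter.1 hr
    rw [← cons_erase hmL, ← cons_erase hrR, sum_cons, sum_cons]
    refine add_le_add hmr (ih (fun x hx => hR x (mem_of_mem_erase hx)) (fun θ => ?_) ?_)
    · by_cases hθ : θ ≤ m
      · have := hcount θ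
        rw [← cons_erase hmL, ← cons_erase hrR, filter_cons_of_pos _ hθ,
          filter_cons_of_pos _ (hθ.trans hmr), card_cons, card_cons] at this
        exact Nat.le_of_succ_le_succ this
      · rw [filter_eq_nil.2 fun x hx hθx => hθ (hθx.trans (hmax x (mem_of_mem_erase hx)))]
        exact Nat.zero_le _
    · rw [card_erase_of_mem hmL, hn, Nat.pred_succ]

end Multiset

theorem Finset.card_filter_map_val {α M : Type*} [LinearOrder M] (s : Finset α) (f : α → M)
    (θ : M) : Multiset.card ((s.val.map f).filter (θ ≤ ·)) = #(s.filter (θ ≤ f ·)) := by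
  rw [Multiset.filter_map, Multiset.card_map]
  rfl

section QuadF

variable {n : ℕ} (h : Fin n → ℝ) {A : Fin n → Fin n → WithTop ℝ}

theorem quadF_empty : quadF h A ∅ = 0 := by
  simp [quadF]

theorem quadF_insert (hsymm : ∀ i j, A i j = A j i) {S : Finset (Fin n)} {x : Fin n}
    (hx : x ∉ S) :
    quadF h A (insert x S) = quadF h A S + ((h x : WithTop ℝ) + ∑ k ∈ S, A x k) := by
  have hpairs : ∀ T : Finset (Fin n), ∑ p ∈ (T ×ˢ T).filter (fun p => p.1 < p.2), A p.1 p.2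
      = ∑ a ∈ T, ∑ b ∈ T, if a < b then A a b else 0 := fun T => by
    rw [sum_filter, sum_product]
  have hsplit : ∑ k ∈ S, A x k
      = (∑ b ∈ S, if x < b then A x b else 0) + ∑ a ∈ S, if a < x then A a x else 0 := by
    rw [← sum_add_distrib]
    refine sum_congr rfl fun k hk => ?_
    rcases lt_or_gt_of_ne (ne_of_mem_of_not_mem hk hx) with hkx | hxk
    · simp [hkx, not_lt_of_gt hkx, hsymm x k]
    · simp [hxk, not_lt_of_gt hxk]
  unfold quadF
  simp only [hpairs, sum_insert hx, sum_add_distrib, lt_irrefl, if_false, zero_add, hsplit]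
  abel

theorem quadF_singleton (hsymm : ∀ i j, A i j = A j i) (x : Fin n) :
    quadF h A {x} = h x := by
  rw [← insert_empty, quadF_insert h hsymm (notMem_empty x), quadF_empty]
  simp

end QuadF

theorem ZMod.add_natCast_ne_self {m l : ℕ} (h0 : 0 < l) (hl : l < m) (p : ZMod m) :
    p + l ≠ p := by
  rw [Ne, add_eq_left, ZMod.natCast_eq_zero_iff]
  exact Nat.not_dvd_of_pos_of_lt h0 hl

section AntiUltrametric

variable {ι : Type*} (A : ι → ι → WithTop ℝ)

def IsAntiUltrametric : Prop :=
  ∀ x y z, x ≠ y → y ≠ z → x ≠ z → min (A y z) (A x z) ≤ A x y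

def Linked (θ : WithTop ℝ) (x y : ι) : Prop := x = y ∨ θ ≤ A x y

noncomputable instance [DecidableEq ι] (θ : WithTop ℝ) : DecidableRel (Linked A θ) :=
  fun x y => inferInstanceAs (Decidable (x = y ∨ θ ≤ A x y))

variable {A} {θ θ' : WithTop ℝ} {x y z : ι}

theorem linked_refl (θ : WithTop ℝ) (x : ι) : Linked A θ x x := Or.inl rfl

theorem linked_iff_of_ne (hxy : x ≠ y) : Linked A θ x y ↔ θ ≤ A x y := or_iff_right hxy

theorem Linked.mono (hθ : θ ≤ θ') (h : Linked A θ' x y) : Linked A θ x y :=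
  h.imp_right hθ.trans

variable (hsymm : ∀ x y, A x y = A y x) (hanti : IsAntiUltrametric A)
include hsymm

theorem Linked.symm (h : Linked A θ x y) : Linked A θ y x :=
  h.imp Eq.symm fun h => hsymm x y ▸ h

include hanti

theorem Linked.trans (hxy : Linked A θ x y) (hyz : Linked A θ y z) : Linked A θ x z := by
  by_cases hxy' : x = y
  · exact hxy' ▸ hyz
  by_cases hyz' : y = z
  · exact hyz' ▸ hxy
  by_cases hxz' : x = z
  · exact Or.inl hxz'
  rw [linked_iff_of_ne hxy'] at hxy
  rw [linked_iff_of_ne hyz'] at hyz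
  exact Or.inr ((le_min (hsymm z y ▸ hyz) hxy).trans (hanti x z y hxz' (Ne.symm hyz') hxy'))

theorem linked_equivalence (θ : WithTop ℝ) : Equivalence (Linked A θ) :=
  ⟨linked_refl θ, Linked.symm hsymm, Linked.trans hsymm hanti⟩

theorem Linked.linked_iff (hxy : Linked A θ x y) : Linked A θ x z ↔ Linked A θ y z :=
  ⟨(hxy.symm hsymm).trans hsymm hanti, hxy.trans hsymm hanti⟩

theorem linked_of_chain {y : ℕ → ι} {k : ℕ} (h : ∀ l < k, Linked A θ (y l) (y (l + 1))) :
    Linked A θ (y 0) (y k) := by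
  induction k with
  | zero => exact linked_refl θ _
  | succ k ih => exact (ih fun l hl => h l (by omega)).trans hsymm hanti (h k (by omega))

theorem linked_around_cycle {m : ℕ} (hm : 2 ≤ m) (v : ZMod m → ι) (p : ZMod m)
    (hθ : ∀ q ≠ p, θ ≤ A (v q) (v (q + 1))) : Linked A θ (v (p + 1)) (v p) := by
  have hchain := linked_of_chain hsymm hanti (θ := θ) (k := m - 1)
    (y := fun l => v (p + 1 + l)) fun l hl => Or.inr ?_
  · have hcast : ((m - 1 : ℕ) : ZMod m) + 1 = 0 := by
      rw [← Nat.cast_succ, Nat.succ_eq_add_one, Nat.sub_add_cancel (by omega), ZMod.natCast_self]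
    have hend : p + 1 + ((m - 1 : ℕ) : ZMod m) = p := by linear_combination hcast
    simpa [hend] using hchain
  · have hne : p + 1 + l ≠ p := by
      rw [add_assoc, ← Nat.cast_one, ← Nat.cast_add, add_comm 1]
      exact ZMod.add_natCast_ne_self (Nat.succ_pos l) (by omega) p
    simpa [add_assoc] using hθ _ hne

theorem IsAntiUltrametric.minTwice_cycle {m : ℕ} (hm : 2 ≤ m) {v : ZMod m → ι}
    (hv : Function.Injective v) : MinTwice fun p => A (v p) (v (p + 1)) := by
  have : NeZero m := ⟨by omega⟩
  set w := fun p : ZMod m => A (v p) (v (p + 1))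
  obtain ⟨p, -, hp⟩ := univ.exists_min_image w univ_nonempty
  by_contra hcon
  have hlt : ∀ q ≠ p, w p < w q := fun q hq =>
    (hp q (mem_univ q)).lt_of_ne fun he => hcon ⟨p, q, hq.symm, fun t => hp t (mem_univ t), he⟩
  have hp1 : p + 1 ≠ p := by
    simpa using ZMod.add_natCast_ne_self (l := 1) one_pos (by omega) p
  obtain ⟨q, hq, hqmin⟩ :=
    (univ.erase p).exists_min_image w ⟨p + 1, mem_erase.2 ⟨hp1, mem_univ _⟩⟩
  have hlink := linked_around_cycle hsymm hanti hm v p fun t ht =>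
    hqmin t (mem_erase.2 ⟨ht, mem_univ t⟩)
  rw [linked_iff_of_ne (hv.ne hp1), hsymm] at hlink
  exact (hlt q (ne_of_mem_erase hq)).not_ge hlink

end AntiUltrametric

theorem isAntiUltrametric_of_mnatConvex {n : ℕ} {h : Fin n → ℝ} {A : Fin n → Fin n → WithTop ℝ}
    (hsymm : ∀ i j, A i j = A j i) (hmn : MnatConvex (quadF h A)) : IsAntiUltrametric A := by
  intro i j k hij hjk hik
  have hpair : ∀ x y, x ≠ y → quadF h A {x, y} = h y + (h x + A x y) := fun x y hxy => by
    rw [quadF_insert h hsymm (by simpa using hxy), sum_singleton, quadF_singleton h hsymm]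
  have cancel : ∀ a b, ((h i + h j + h k : ℝ) : WithTop ℝ) + a ≤ (h i + h j + h k : ℝ) + b →
      a ≤ b := fun a b => (WithTop.add_le_add_iff_left WithTop.coe_ne_top).1
  rcases hmn {i, j} {k} i (by simp [hik]) with hle | ⟨j', hj', hle⟩
  · rw [erase_insert (by simpa using hij), hpair i j hij, hpair i k hik,
      quadF_singleton h hsymm, quadF_singleton h hsymm] at hle
    refine min_le_of_right_le (cancel _ _ ?_)
    push_cast
    convert hle using 1 <;> abel
  · obtain rfl : k = j' := (mem_singleton.1 (mem_sdiff.1 hj').1).symm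
    rw [erase_insert (by simpa using hij), show ({i, k} : Finset (Fin n)).erase k = {i} by aesop,
      hpair k j hjk.symm, hpair i j hij, quadF_singleton h hsymm, quadF_singleton h hsymm] at hle
    refine min_le_of_left_le (hsymm j k ▸ cancel _ _ ?_)
    push_cast
    convert hle using 1 <;> abel

theorem Finset.card_le_card_of_forall_card_filter_le {α : Type*} {r : α → α → Prop}
    [DecidableRel r] (hr : Equivalence r) {s t : Finset α}
    (h : ∀ y ∈ t, #(t.filter (r y)) ≤ #(s.filter (r y))) : #t ≤ #s := by
  induction t using Finset.strongInduction generalizing s with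
  | H t ih =>
  rcases t.eq_empty_or_nonempty with rfl | ⟨y, hy⟩
  · simp
  have hrest := ih (t.filter (¬ r y ·)) (filter_ssubset.2 ⟨y, hy, not_not.2 (hr.refl y)⟩)
    (s := s.filter (¬ r y ·)) fun z hz => ?_
  · rw [← card_filter_add_card_filter_not (r y) (s := t),
      ← card_filter_add_card_filter_not (r y) (s := s)]
    exact add_le_add (h y hy) hrest
  · obtain ⟨hzt, hyz⟩ := mem_filter.1 hz
    have hclass : ∀ u : Finset α, (u.filter (¬ r y ·)).filter (r z) = u.filter (r z) := fun u => by
      rw [filter_filter]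
      exact filter_congr fun w _ =>
        and_iff_right_of_imp fun hzw hyw => hyz (hr.trans hyw (hr.symm hzw))
    rw [hclass, hclass]
    exact h z hzt

section Exchange

variable {ι : Type*} [DecidableEq ι] (A : ι → ι → WithTop ℝ)

def IsHeavy (X Y : Finset ι) (θ : WithTop ℝ) (x : ι) : Prop :=
  #(X.filter (Linked A θ x)) < #(Y.filter (Linked A θ x))

variable {A} {X Y : Finset ι} {θ θ' : WithTop ℝ} {x y : ι}

theorem filter_le_eq_filter_linked {Z : Finset ι} (hx : x ∉ Z) :
    Z.filter (θ ≤ A x ·) = Z.filter (Linked A θ x) :=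
  filter_congr fun _ hz => (linked_iff_of_ne (ne_of_mem_of_not_mem hz hx).symm).symm

theorem exists_isHeavy_of_sum_lt (hnn : ∀ x y, x ≠ y → 0 ≤ A x y) {i : ι} (hiX : i ∉ X)
    (hiY : i ∉ Y) (hlt : ∑ x ∈ X, A i x < ∑ y ∈ Y, A i y) : ∃ θ, IsHeavy A X Y θ i := by
  by_contra! hlight
  refine hlt.not_ge ?_
  simp only [sum_eq_multiset_sum]
  refine Multiset.sum_le_sum_of_card_filter_le (fun r hr => ?_) fun θ => ?_
  · obtain ⟨x, hx, rfl⟩ := Multiset.mem_map.1 hr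
    exact hnn i x (ne_of_mem_of_not_mem hx hiX).symm
  · rw [Finset.card_filter_map_val, Finset.card_filter_map_val, filter_le_eq_filter_linked hiX,
      filter_le_eq_filter_linked hiY]
    exact not_lt.1 (hlight θ)

section

variable (hsymm : ∀ x y, A x y = A y x) (hanti : IsAntiUltrametric A)
include hsymm hanti

theorem Linked.isHeavy_iff (hxy : Linked A θ x y) :
    IsHeavy A X Y θ x ↔ IsHeavy A X Y θ y := by
  have hclass : ∀ Z : Finset ι, Z.filter (Linked A θ x) = Z.filter (Linked A θ y) := fun Z =>
    filter_congr fun _ _ => hxy.linked_iff hsymm hanti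
  rw [IsHeavy, IsHeavy, hclass, hclass]

/-- The classes at a finer level `θ₁` partition the class of `x` at level `θ`, so one of them
is heavy as well. -/
theorem exists_isHeavy_of_le {θ₁ : WithTop ℝ} (hθ : θ ≤ θ₁) (hx : IsHeavy A X Y θ x) :
    ∃ y, Linked A θ x y ∧ IsHeavy A X Y θ₁ y := by
  by_contra! hlight
  refine hx.not_ge (card_le_card_of_forall_card_filter_le (linked_equivalence hsymm hanti θ₁)
    fun y hy => ?_)
  have hxy := (mem_filter.1 hy).2
  have hsub : ∀ Z : Finset ι, (Z.filter (Linked A θ x)).filter (Linked A θ₁ y) =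
      Z.filter (Linked A θ₁ y) := fun Z => by
    rw [filter_filter]
    exact filter_congr fun z _ => and_iff_right_of_imp fun hyz =>
      hxy.trans hsymm hanti (hyz.mono hθ)
  rw [hsub, hsub]
  exact not_lt.1 (hlight y hxy)

/-- At or below `A i j` the classes of `i` and `j` coincide; above it they are disjoint, with
that of `i` light and that of `j` heavy. -/
theorem card_filter_exchange_le {i j : ι} (hiX : i ∉ X) (hiY : i ∉ Y) (hj : j ∈ Y \ X)
    (hlight : ∀ θ, A i j < θ → ¬IsHeavy A X Y θ i)
    (hheavy : ∀ θ, A i j < θ → IsHeavy A X Y θ j)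
    (θ : WithTop ℝ) :
    #(X.filter (θ ≤ A j ·)) + #((Y.erase j).filter (θ ≤ A i ·)) ≤
      #(X.filter (θ ≤ A i ·)) + #((Y.erase j).filter (θ ≤ A j ·)) := by
  obtain ⟨hjY, hjX⟩ := mem_sdiff.1 hj
  have hij : i ≠ j := ne_of_mem_of_not_mem hjY hiY |>.symm
  rw [filter_le_eq_filter_linked hiX, filter_le_eq_filter_linked hjX,
    filter_le_eq_filter_linked fun h => hiY (mem_of_mem_erase h),
    filter_le_eq_filter_linked (notMem_erase j Y)]
  by_cases hθ : θ ≤ A i j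
  · have hclass : ∀ Z : Finset ι, Z.filter (Linked A θ i) = Z.filter (Linked A θ j) := fun Z =>
      filter_congr fun _ _ => Linked.linked_iff hsymm hanti (Or.inr hθ)
    rw [hclass, hclass]
  · push Not at hθ
    have hunlinked : ¬Linked A θ i j := by rw [linked_iff_of_ne hij]; exact hθ.not_ge
    have hi : (Y.erase j).filter (Linked A θ i) = Y.filter (Linked A θ i) := by
      rw [filter_erase, erase_eq_of_notMem fun h => hunlinked (mem_filter.1 h).2]
    have hj : #((Y.erase j).filter (Linked A θ j)) + 1 = #(Y.filter (Linked A θ j)) := by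
      rw [filter_erase, card_erase_add_one (mem_filter.2 ⟨hjY, linked_refl θ j⟩)]
    have := hlight θ hθ
    have := hheavy θ hθ
    rw [IsHeavy] at *
    rw [hi]
    omega

end

variable [Fintype ι]

variable (A) in
/-- The classes of `Linked A θ` only change when `θ` crosses an entry of `A`; `⊤` is added so that
every threshold lies below some level. -/
noncomputable def levels : Finset (WithTop ℝ) :=
  insert ⊤ (univ.image fun p : ι × ι => A p.1 p.2)

theorem filter_linked_eq_of_no_level_between (hθ : θ ≤ θ')
    (hgap : ∀ t ∈ levels A, θ ≤ t → θ' ≤ t) (Z : Finset ι) (x : ι) :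
    Z.filter (Linked A θ x) = Z.filter (Linked A θ' x) :=
  filter_congr fun z _ => ⟨fun h => h.imp_right
    (hgap _ (mem_insert_of_mem (mem_image_of_mem _ (mem_univ (x, z))))), Linked.mono hθ⟩

theorem isHeavy_iff_of_no_level_between (hθ : θ ≤ θ')
    (hgap : ∀ t ∈ levels A, θ ≤ t → θ' ≤ t) : IsHeavy A X Y θ x ↔ IsHeavy A X Y θ' x := by
  rw [IsHeavy, IsHeavy, filter_linked_eq_of_no_level_between hθ hgap,
    filter_linked_eq_of_no_level_between hθ hgap]

theorem exists_isHeavy_maximal (hx : IsHeavy A X Y θ x) :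
    ∃ θ₀, IsHeavy A X Y θ₀ x ∧ ∀ θ, θ₀ < θ → ¬IsHeavy A X Y θ x := by
  classical
  set S := (levels A).filter (IsHeavy A X Y · x)
  have hround : ∀ θ, IsHeavy A X Y θ x → ∃ t ∈ S, θ ≤ t := fun θ hθ => by
    have hne : ((levels A).filter (θ ≤ ·)).Nonempty :=
      ⟨⊤, mem_filter.2 ⟨mem_insert_self _ _, le_top⟩⟩
    obtain ⟨ht, hθt⟩ := mem_filter.1 (min'_mem _ hne)
    refine ⟨_, mem_filter.2 ⟨ht, ?_⟩, hθt⟩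
    rwa [← isHeavy_iff_of_no_level_between hθt fun s hs hθs => min'_le _ _ (mem_filter.2 ⟨hs, hθs⟩)]
  obtain ⟨t, ht, -⟩ := hround θ hx
  refine ⟨S.max' ⟨t, ht⟩, (mem_filter.1 (max'_mem S _)).2, fun θ hθ hheavy => ?_⟩
  obtain ⟨t', ht', hle⟩ := hround θ hheavy
  exact (hθ.trans_le hle).not_ge (le_max' S t' ht')

variable (hsymm : ∀ x y, A x y = A y x) (hanti : IsAntiUltrametric A)
include hsymm hanti

theorem exists_isHeavy_above (hx : IsHeavy A X Y θ x) :
    ∃ j ∈ Y \ X, Linked A θ x j ∧ ∀ θ', θ < θ' → IsHeavy A X Y θ' j := by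
  induction hk : #((levels A).filter (θ < ·)) using Nat.strong_induction_on generalizing θ x with
  | _ k ih =>
  by_cases habove : ((levels A).filter (θ < ·)).Nonempty
  · set θ₁ := min' _ habove
    have hθ₁ : θ < θ₁ := (mem_filter.1 (min'_mem _ habove)).2
    obtain ⟨y, hxy, hy⟩ := exists_isHeavy_of_le hsymm hanti hθ₁.le hx
    have hfewer : #((levels A).filter (θ₁ < ·)) < k := hk ▸ card_lt_card
      ⟨monotone_filter_right _ fun _ _ ht => hθ₁.trans ht,
        fun hsub => (mem_filter.1 (hsub (min'_mem _ habove))).2.false⟩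
    obtain ⟨j, hj, hyj, hj'⟩ := ih _ hfewer hy rfl
    refine ⟨j, hj, hxy.trans hsymm hanti (hyj.mono hθ₁.le), fun θ' hθ' => ?_⟩
    rcases lt_or_ge θ₁ θ' with h | h
    · exact hj' θ' h
    · rw [isHeavy_iff_of_no_level_between h fun t ht hle =>
        min'_le _ _ (mem_filter.2 ⟨ht, hθ'.trans_le hle⟩), ← hyj.isHeavy_iff hsymm hanti]
      exact hy
  · obtain ⟨j, hjY, hjX⟩ := exists_mem_notMem_of_card_lt_card hx
    obtain ⟨hjY, hxj⟩ := mem_filter.1 hjY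
    have hjX : j ∉ X := fun h => hjX (mem_filter.2 ⟨h, hxj⟩)
    refine ⟨j, mem_sdiff.2 ⟨hjY, hjX⟩, hxj, fun θ' hθ' => ?_⟩
    have hsingle : ∀ z, Linked A θ' j z → z = j := fun z hz => hz.elim Eq.symm fun hle =>
      absurd ⟨A j z, mem_filter.2 ⟨mem_insert_of_mem (mem_image_of_mem _ (mem_univ (j, z))),
        hθ'.trans_le hle⟩⟩ habove
    calc #(X.filter (Linked A θ' j)) = 0 :=
          card_eq_zero.2 (filter_eq_empty_iff.2 fun z hz hl => hjX (hsingle z hl ▸ hz))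
      _ < #(Y.filter (Linked A θ' j)) := card_pos.2 ⟨j, mem_filter.2 ⟨hjY, linked_refl θ' j⟩⟩


theorem sum_exchange (hnn : ∀ x y, x ≠ y → 0 ≤ A x y) {i : ι} (hiX : i ∉ X) (hiY : i ∉ Y) :
    ∑ y ∈ Y, A i y ≤ ∑ x ∈ X, A i x ∨ ∃ j ∈ Y \ X,
      ∑ x ∈ X, A j x + ∑ y ∈ Y.erase j, A i y ≤ ∑ x ∈ X, A i x + ∑ y ∈ Y.erase j, A j y := by
  by_cases h0 : ∑ y ∈ Y, A i y ≤ ∑ x ∈ X, A i x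
  · exact Or.inl h0
  right
  obtain ⟨θ, hθ⟩ := exists_isHeavy_of_sum_lt hnn hiX hiY (not_le.1 h0)
  obtain ⟨θ₀, hθ₀, hmax⟩ := exists_isHeavy_maximal hθ
  obtain ⟨j, hj, hij, hj'⟩ := exists_isHeavy_above hsymm hanti hθ₀
  have hθ₀ij : θ₀ ≤ A i j :=
    (linked_iff_of_ne (ne_of_mem_of_not_mem (mem_sdiff.1 hj).1 hiY).symm).1 hij
  refine ⟨j, hj, ?_⟩
  simp only [sum_eq_multiset_sum, ← Multiset.sum_add]
  refine Multiset.sum_le_sum_of_card_filter_le (fun r hr => ?_) fun θ => ?_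
  · rcases Multiset.mem_add.1 hr with hr | hr <;> obtain ⟨x, hx, rfl⟩ := Multiset.mem_map.1 hr
    · exact hnn i x (ne_of_mem_of_not_mem hx hiX).symm
    · exact hnn j x (ne_of_mem_of_not_mem hx (notMem_erase j Y)).symm
  · simp only [Multiset.filter_add, Multiset.card_add, Finset.card_filter_map_val]
    exact card_filter_exchange_le hsymm hanti hiX hiY hj (fun θ h => hmax θ (hθ₀ij.trans_lt h))
      (fun θ h => hj' θ (hθ₀ij.trans_lt h)) θ

end Exchange

theorem mnatConvex_quadF {n : ℕ} {A : Fin n → Fin n → WithTop ℝ} (hsymm : ∀ i j, A i j = A j i)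
    (hnn : ∀ i j, i ≠ j → 0 ≤ A i j) (hanti : IsAntiUltrametric A) (h : Fin n → ℝ) :
    MnatConvex (quadF h A) := by
  intro X Y i hi
  obtain ⟨hiX, hiY⟩ := mem_sdiff.1 hi
  have hX := quadF_insert h hsymm (notMem_erase i X)
  rw [insert_erase hiX] at hX
  rcases sum_exchange hsymm hanti hnn (notMem_erase i X) hiY with hle | ⟨j, hj, hle⟩
  · left
    rw [hX, quadF_insert h hsymm hiY]
    convert add_le_add_left hle (quadF h A (X.erase i) + quadF h A Y + h i) using 1 <;> abel
  · obtain ⟨hjY, hjX⟩ := mem_sdiff.1 hj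
    have hji : j ≠ i := ne_of_mem_of_not_mem hjY hiY
    right
    refine ⟨j, mem_sdiff.2 ⟨hjY, fun h => hjX (mem_erase.2 ⟨hji, h⟩)⟩, ?_⟩
    have hY := quadF_insert h hsymm (notMem_erase j Y)
    rw [insert_erase hjY] at hY
    rw [erase_insert_of_ne hji.symm, quadF_insert h hsymm hjX,
      quadF_insert h hsymm fun h => hiY (mem_of_mem_erase h), hX, hY]
    convert add_le_add_left hle
      (quadF h A (X.erase i) + quadF h A (Y.erase j) + h i + h j) using 1 <;> abel

theorem ZMod.val_add_one_of_lt {k : ℕ} {p : ZMod (k + 1)} (h : p.val < k) :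
    (p + 1).val = p.val + 1 := by
  rw [← ZMod.natCast_zmod_val p, ← Nat.cast_succ, ZMod.val_cast_of_lt (by omega),
    ZMod.val_cast_of_lt (by omega)]

theorem ZMod.val_add_one_of_eq {k : ℕ} {p : ZMod (k + 1)} (h : p.val = k) : (p + 1).val = 0 := by
  rw [← ZMod.natCast_zmod_val p, h, ← Nat.cast_succ, ZMod.natCast_self, ZMod.val_zero]

section Walks

variable {ι : Type*}

def IsWalk (R : ι → ι → Prop) (k : ℕ) (y : ℕ → ι) : Prop := ∀ l < k, R (y l) (y (l + 1))

variable {R : ι → ι → Prop} {k s t : ℕ} {y : ℕ → ι}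

theorem IsWalk.shift (hy : IsWalk R k y) (hst : s ≤ t) (htk : t ≤ k) :
    IsWalk R (t - s) fun l => y (s + l) :=
  fun l hl => hy (s + l) (by omega)

/-- Cut out the segment strictly between `s` and `t + 1`, joining `y s` directly to `y (t + 1)`. -/
theorem IsWalk.splice (hy : IsWalk R k y) (hst : s ≤ t) (htk : t ≤ k)
    (hjoin : t < k → R (y s) (y (t + 1))) :
    IsWalk R (k - (t - s)) fun l => if l ≤ s then y l else y (l + (t - s)) := by
  intro l hl
  dsimp only
  split_ifs with h1 h2 h2
  · exact hy l (by omega)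
  · obtain rfl : l = s := by omega
    rw [show l + 1 + (t - l) = t + 1 by omega]
    exact hjoin (by omega)
  · omega
  · rw [show l + 1 + (t - s) = l + (t - s) + 1 by omega]
    exact hy _ (by omega)

theorem isCycle_of_walk (hk : 2 ≤ k) (hy : IsWalk R k y) (hclose : R (y k) (y 0))
    (hinj : ∀ s t, s < t → t ≤ k → y s ≠ y t) : IsCycle R (k + 1) fun p => y p.val := by
  refine ⟨by omega, fun p q hpq => ZMod.val_injective _ ?_, fun p => ?_⟩
  · have hp := ZMod.val_lt p
    have hq := ZMod.val_lt q
    rcases lt_trichotomy p.val q.val with h | h | h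
    · exact absurd hpq (hinj _ _ h (by omega))
    · exact h
    · exact absurd hpq.symm (hinj _ _ h (by omega))
  · dsimp only
    rcases (Nat.lt_succ_iff.1 (ZMod.val_lt p)).lt_or_eq with hp | hp
    · rw [ZMod.val_add_one_of_lt hp]
      exact hy _ hp
    · rw [ZMod.val_add_one_of_eq hp, hp]
      exact hclose

theorem isChordless_of_walk (hR : ∀ a b, R a b → R b a)
    (hchord : ∀ s t, s + 2 ≤ t → t ≤ k → (s = 0 → t ≠ k) → ¬R (y s) (y t)) :
    IsChordless R (k + 1) fun p => y p.val := by
  have hno : ∀ p q : ZMod (k + 1), p.val < q.val → q ≠ p + 1 → p ≠ q + 1 →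
      ¬R (y p.val) (y q.val) := by
    intro p q hpq h1 h2
    have hq := Nat.lt_succ_iff.1 (ZMod.val_lt q)
    refine hchord _ _ ?_ hq fun hp0 hqk => h2 (ZMod.val_injective _ ?_)
    · by_contra h
      exact h1 (ZMod.val_injective _ (by rw [ZMod.val_add_one_of_lt (by omega)]; omega))
    · rw [ZMod.val_add_one_of_eq hqk, hp0]
  intro p q hqp hqp1 hpq1 hadj
  rcases lt_trichotomy p.val q.val with h | h | h
  · exact hno p q h hqp1 hpq1 hadj
  · exact hqp (ZMod.val_injective _ h.symm)
  · exact hno q p h hpq1 hqp1 (hR _ _ hadj)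

theorem not_minTwice_of_walk {w : ι → ι → WithTop ℝ} {θ : WithTop ℝ}
    (hy : ∀ l < k, θ ≤ w (y l) (y (l + 1))) (hclose : w (y k) (y 0) < θ) :
    ¬MinTwice fun p : ZMod (k + 1) => w (y p.val) (y (p + 1).val) := by
  rintro ⟨p, q, hpq, hmin, heq⟩
  have hlight : ∀ r : ZMod (k + 1), w (y r.val) (y (r + 1).val) < θ → r.val = k := by
    intro r hr
    by_contra hrk
    have hrk : r.val < k := by have := ZMod.val_lt r; omega
    rw [ZMod.val_add_one_of_lt hrk] at hr
    exact (hy r.val hrk).not_gt hr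
  have hkval : (k : ZMod (k + 1)).val = k := ZMod.val_cast_of_lt (Nat.lt_succ_self k)
  have hclosing : w (y (k : ZMod (k + 1)).val) (y ((k : ZMod (k + 1)) + 1).val) < θ := by
    rwa [ZMod.val_add_one_of_eq hkval, hkval]
  have hp := hlight p ((hmin _).trans_lt hclosing)
  have hq := hlight q (heq.symm.trans_lt ((hmin _).trans_lt hclosing))
  exact hpq (ZMod.val_injective _ (hp.trans hq.symm))

theorem exists_walk_of_reflTransGen {a b : ι} (h : Relation.ReflTransGen R a b) :
    ∃ k y, y 0 = a ∧ y k = b ∧ IsWalk R k y := by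
  induction h with
  | refl => exact ⟨0, fun _ => a, rfl, rfl, fun l hl => absurd hl (Nat.not_lt_zero l)⟩
  | @tail c d _ hcd ih =>
    obtain ⟨k, y, h0, hk, hy⟩ := ih
    refine ⟨k + 1, fun l => if l ≤ k then y l else d, by simpa using h0, by simp, fun l hl => ?_⟩
    rcases Nat.lt_or_ge l k with hlk | hlk
    · simpa [hlk.le, Nat.succ_le_of_lt hlk] using hy l hlk
    · obtain rfl : l = k := by omega
      simpa [hk] using hcd

end Walks

section Completion

variable {ι : Type*} (H : ι → ι → Option (WithTop ℝ))

def assignAdj (a b : ι) : Prop := a ≠ b ∧ (H a b).isSome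

def weight (a b : ι) : WithTop ℝ := (H a b).getD ⊤

def AdjAbove (θ : WithTop ℝ) (a b : ι) : Prop := assignAdj H a b ∧ θ ≤ weight H a b

def MinTwiceOnChordlessCycles : Prop :=
  ∀ (m : ℕ) (v : ZMod m → ι), IsCycle (assignAdj H) m v → IsChordless (assignAdj H) m v →
    MinTwice fun p => weight H (v p) (v (p + 1))

variable {H}

theorem assignAdj_symm (hsymm : ∀ a b, H a b = H b a) (a b : ι) :
    assignAdj H a b → assignAdj H b a := fun h => ⟨h.1.symm, hsymm a b ▸ h.2⟩

theorem AdjAbove.mono {θ θ' : WithTop ℝ} (hθ : θ ≤ θ') {a b : ι} (h : AdjAbove H θ' a b) :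
    AdjAbove H θ a b :=
  ⟨h.1, hθ.trans h.2⟩

theorem reflTransGen_adjAbove_symm (hsymm : ∀ a b, H a b = H b a) {θ : WithTop ℝ} {a b : ι}
    (h : Relation.ReflTransGen (AdjAbove H θ) a b) : Relation.ReflTransGen (AdjAbove H θ) b a :=
  Relation.ReflTransGen.mono (fun x y hxy =>
    ⟨assignAdj_symm hsymm _ _ hxy.1, by rw [weight, hsymm]; exact hxy.2⟩) _ _
    (Relation.reflTransGen_swap.2 h)

/-- A shortest walk beating an edge would close up, with that edge, into a chordless cycle
whose minimum is attained only once. -/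
theorem le_weight_of_walk (hsymm : ∀ a b, H a b = H b a) (hcyc : MinTwiceOnChordlessCycles H)
    {θ : WithTop ℝ} {k : ℕ} {y : ℕ → ι} (hy : IsWalk (AdjAbove H θ) k y)
    (hadj : assignAdj H (y 0) (y k)) : θ ≤ weight H (y 0) (y k) := by
  induction k using Nat.strong_induction_on generalizing y with
  | _ k ih =>
  by_contra! hlt
  have shorter : ∀ m < k, ∀ y' : ℕ → ι, IsWalk (AdjAbove H θ) m y' → y' 0 = y 0 → y' m = y k →
      False := fun m hm y' hy' h0 hm' =>
    (ih m hm hy' (h0 ▸ hm' ▸ hadj)).not_gt (h0 ▸ hm' ▸ hlt)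
  have hk : 2 ≤ k := by
    by_contra! hk
    interval_cases k
    · exact hadj.1 rfl
    · exact (hy 0 one_pos).2.not_gt hlt
  have hinj : ∀ s t, s < t → t ≤ k → y s ≠ y t := fun s t hst htk heq =>
    shorter _ (by omega) _ (hy.splice hst.le htk fun htk => heq ▸ hy t htk) (by simp) (by
      split_ifs with h
      · rw [show k - (t - s) = s by omega, heq, show t = k by omega]
      · rw [Nat.sub_add_cancel (by omega)])
  have hchord : ∀ s t, s + 2 ≤ t → t ≤ k → (s = 0 → t ≠ k) → ¬assignAdj H (y s) (y t) := by
    intro s t hst htk hend hst_adj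
    by_cases hw : θ ≤ weight H (y s) (y t)
    · refine shorter _ (by omega) _
        (hy.splice (s := s) (t := t - 1) (by omega) (by omega) fun _ => ?_) (by simp) ?_
      · rw [Nat.sub_add_cancel (by omega)]
        exact ⟨hst_adj, hw⟩
      · rw [if_neg (by omega), Nat.sub_add_cancel (by omega)]
    · have hsub := ih (t - s) (by omega) (hy.shift (by omega) htk)
      simp only [add_zero, Nat.add_sub_cancel' (by omega : s ≤ t)] at hsub
      exact hw (hsub hst_adj)
  refine not_minTwice_of_walk (fun l hl => (hy l hl).2) ?_ (hcyc _ _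
    (isCycle_of_walk hk (fun l hl => (hy l hl).1) (assignAdj_symm hsymm _ _ hadj) hinj)
    (isChordless_of_walk (assignAdj_symm hsymm) hchord))
  rw [weight, hsymm]
  exact hlt

end Completion

section Bottleneck

variable {ι : Type*} [Fintype ι] (H : ι → ι → Option (WithTop ℝ))

noncomputable def bottleneckCandidates : Finset (WithTop ℝ) :=
  insert 0 (univ.image fun p : ι × ι => weight H p.1 p.2)

open Classical in
/-- Bottleneck values are entries of `H`, so maximising over `bottleneckCandidates` loses nothing;
`0` keeps the set nonempty and the completion nonnegative. -/
noncomputable def bottleneck (a b : ι) : WithTop ℝ :=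
  ((bottleneckCandidates H).filter
      fun θ => θ = 0 ∨ Relation.ReflTransGen (AdjAbove H θ) a b).max'
    ⟨0, mem_filter.2 ⟨mem_insert_self _ _, Or.inl rfl⟩⟩

variable {H}

theorem bottleneck_spec (a b : ι) : bottleneck H a b ∈ bottleneckCandidates H ∧
    (bottleneck H a b = 0 ∨ Relation.ReflTransGen (AdjAbove H (bottleneck H a b)) a b) := by
  classical
  exact mem_filter.1 (max'_mem _ _)

theorem le_bottleneck {θ : WithTop ℝ} {a b : ι} (hθ : θ ∈ bottleneckCandidates H)
    (hreach : θ = 0 ∨ Relation.ReflTransGen (AdjAbove H θ) a b) : θ ≤ bottleneck H a b := by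
  classical
  exact le_max' _ _ (mem_filter.2 ⟨hθ, hreach⟩)

theorem bottleneck_nonneg (a b : ι) : 0 ≤ bottleneck H a b :=
  le_bottleneck (mem_insert_self _ _) (Or.inl rfl)

theorem bottleneck_comm (hsymm : ∀ a b, H a b = H b a) (a b : ι) :
    bottleneck H a b = bottleneck H b a := by
  refine le_antisymm ?_ ?_ <;> obtain ⟨hmem, hreach⟩ := bottleneck_spec (H := H) _ _ <;>
    exact le_bottleneck hmem (hreach.imp_right (reflTransGen_adjAbove_symm hsymm))

theorem isAntiUltrametric_bottleneck (hsymm : ∀ a b, H a b = H b a) :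
    IsAntiUltrametric (bottleneck H) := by
  intro i j k _ _ _
  obtain ⟨hjk, hjk0 | hjk'⟩ := bottleneck_spec (H := H) j k
  · exact min_le_of_left_le (hjk0 ▸ bottleneck_nonneg i j)
  obtain ⟨hik, hik0 | hik'⟩ := bottleneck_spec (H := H) i k
  · exact min_le_of_right_le (hik0 ▸ bottleneck_nonneg i j)
  refine le_bottleneck (by rcases min_choice (bottleneck H j k) (bottleneck H i k) with h | h <;>
    rwa [h]) (Or.inr ?_)
  exact (Relation.ReflTransGen.mono (fun _ _ => AdjAbove.mono (min_le_right _ _)) _ _ hik').trans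
    (reflTransGen_adjAbove_symm hsymm
      (Relation.ReflTransGen.mono (fun _ _ => AdjAbove.mono (min_le_left _ _)) _ _ hjk'))

theorem bottleneck_eq (hsymm : ∀ a b, H a b = H b a)
    (hnn : ∀ a b x, a ≠ b → H a b = some x → 0 ≤ x) (hcyc : MinTwiceOnChordlessCycles H)
    {a b : ι} {x : WithTop ℝ} (hab : a ≠ b) (hx : H a b = some x) : bottleneck H a b = x := by
  have hw : weight H a b = x := by rw [weight, hx, Option.getD_some]
  have hadj : assignAdj H a b := ⟨hab, by rw [hx]; rfl⟩
  refine le_antisymm ?_ (le_bottleneck ?_ (Or.inr (.single ⟨hadj, hw.ge⟩)))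
  · obtain ⟨-, h0 | hreach⟩ := bottleneck_spec (H := H) a b
    · exact h0 ▸ hnn a b x hab hx
    · obtain ⟨k, y, rfl, rfl, hy⟩ := exists_walk_of_reflTransGen hreach
      exact hw ▸ le_weight_of_walk hsymm hcyc hy hadj
  · exact mem_insert_of_mem (mem_image.2 ⟨(a, b), mem_univ _, hw⟩)

end Bottleneck

theorem stmt1_general (n : ℕ) (H : Fin n → Fin n → Option (WithTop ℝ))
    (Hsymm : ∀ i j : Fin n, H i j = H j i)
    (Hnn : ∀ (i j : Fin n) (a : WithTop ℝ), i ≠ j → H i j = some a → 0 ≤ a) :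
    Completable H ↔
      ∀ (m : ℕ) (v : ZMod m → Fin n),
        IsCycle (fun a b => a ≠ b ∧ (H a b).isSome) m v →
        IsChordless (fun a b => a ≠ b ∧ (H a b).isSome) m v →
        MinTwice (fun p : ZMod m => (H (v p) (v (p + 1))).getD ⊤) := by
  constructor
  · rintro ⟨H', hsymm', hagree, h, hmn⟩ m v hcycle -
    have hw : ∀ p, (H (v p) (v (p + 1))).getD ⊤ = H' (v p) (v (p + 1)) := fun p => by
      obtain ⟨hne, hsome⟩ := hcycle.2.2 p
      obtain ⟨x, hx⟩ := Option.isSome_iff_exists.1 hsome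
      rw [hx, hagree _ _ x hne hx, Option.getD_some]
    simp only [hw]
    exact (isAntiUltrametric_of_mnatConvex hsymm' hmn).minTwice_cycle hsymm'
      (by have := hcycle.1; omega) hcycle.2.1
  · intro hcyc
    exact ⟨bottleneck H, bottleneck_comm Hsymm,
      fun i j x hij hx => bottleneck_eq Hsymm Hnn hcyc hij hx,
      0, mnatConvex_quadF (bottleneck_comm Hsymm) (fun i j _ => bottleneck_nonneg i j)
        (isAntiUltrametric_bottleneck Hsymm) 0⟩

/-- A symmetric partial matrix whose defined entries are nonnegative and satisfy the
anti-ultrametric property (whenever all three entries of a triple are defined) is M♮-convex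
completable iff on every chordless cycle of the assignment graph `G_H` (vertices `[n]`,
edges the defined pairs, weighted by the entries) the minimum edge weight is attained by at
least two edges. -/
theorem stmt1 (n : ℕ) (H : Fin n → Fin n → Option (WithTop ℝ))
    (Hsymm : ∀ i j : Fin n, H i j = H j i)
    (Hnn : ∀ (i j : Fin n) (a : WithTop ℝ), i ≠ j → H i j = some a → 0 ≤ a)
    (Hanti : ∀ (i j k : Fin n) (a b c : WithTop ℝ), i ≠ j → j ≠ k → i ≠ k →
      H i j = some a → H j k = some b → H i k = some c → min b c ≤ a) :
    Completable H ↔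
      ∀ (m : ℕ) (v : ZMod m → Fin n),
        IsCycle (fun a b => a ≠ b ∧ (H a b).isSome) m v →
        IsChordless (fun a b => a ≠ b ∧ (H a b).isSome) m v →
        MinTwice (fun p : ZMod m => (H (v p) (v (p + 1))).getD ⊤) :=
  stmt1_general n H Hsymm Hnn
end

section
/- Let H = (h_{ij})_{i,j∈[n]} be a symmetric partial matrix whose defined off-diagonal entries lie in ℝ₊ ∪ {+∞} and satisfy h_{ij} ≥ min{h_{jk}, h_{ik}} whenever all three entries are defined. If for every α ∈ ℝ₊ ∪ {+∞} each connected component of the graph G̃_H^α := (V_H^α, E_H^α ∪ S_H^α) is a complete graph, then H is M♮-convex completable; moreover, one such completion assigns to each undefined entry h_{ij} the largest value α among the defined entry values for which {i,j} ∈ S_H^α, and the smallest defined entry value to all remaining undefined entries. -/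
/-!
The completion `H'` is anti-ultrametric, `min (H' i k) (H' k j) ≤ H' i j`: at the level `m` of
the left side, `i`, `k`, `j` lie in one component of `G̃_H^m`, which is a clique, and every edge
of `G̃_H^m` has completed value at least `m`.

For a nonnegative symmetric anti-ultrametric `Q`, the clusters `{v} ∪ {u | α ≤ Q v u}` are the
blocks of partitions that refine as `α` grows, and a sum `∑ u ∈ S, Q v u` is controlled by the
counts `#(S ∩ cluster Q α v)`. For the exchange at `i ∈ X \ Y`, either `Y` never outnumbers
`X \ {i}` in the clusters of `i`, and `i` moves from `X` to `Y`; or, at the highest level `β`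
where it does, one descends through finer and finer blocks to some `j ∈ Y \ X` around which `Y`
outnumbers `X \ {i}` at every level above `β`, and `i` and `j` are swapped.
-/

open Finset

/-- `{i,j} ∈ E_H^α`: the entry `h_{ij}` is defined and `h_{ij} ≥ α`. -/
def AdjE {n : ℕ} (H : Fin n → Fin n → Option (WithTop ℝ)) (α : WithTop ℝ)
    (i j : Fin n) : Prop :=
  i ≠ j ∧ ∃ c : WithTop ℝ, H i j = some c ∧ α ≤ c

/-- `i ∈ V_H^α`: the vertex `i` is incident to some edge of `E_H^α`. -/
def InV {n : ℕ} (H : Fin n → Fin n → Option (WithTop ℝ)) (α : WithTop ℝ)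
    (i : Fin n) : Prop :=
  ∃ j : Fin n, AdjE H α i j

/-- `{i,j} ∈ S_H^α`: `{i,j} ∉ E_H` (the entry is undefined), `i, j ∈ V_H^α`, and `i, j` are
connected by a path in the graph `(V_H^α, E_H^α)`. -/
def AdjS {n : ℕ} (H : Fin n → Fin n → Option (WithTop ℝ)) (α : WithTop ℝ)
    (i j : Fin n) : Prop :=
  i ≠ j ∧ H i j = none ∧ InV H α i ∧ InV H α j ∧ Relation.ReflTransGen (AdjE H α) i j

/-- Adjacency in the graph `G̃_H^α = (V_H^α, E_H^α ∪ S_H^α)`. -/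
def AdjT {n : ℕ} (H : Fin n → Fin n → Option (WithTop ℝ)) (α : WithTop ℝ)
    (i j : Fin n) : Prop :=
  AdjE H α i j ∨ AdjS H α i j

/-- `β` is one of the values of the defined entries of `H`. -/
def DefVal {n : ℕ} (H : Fin n → Fin n → Option (WithTop ℝ)) (β : WithTop ℝ) : Prop :=
  ∃ i j : Fin n, i ≠ j ∧ H i j = some β

theorem Multiset.sum_le_sum_of_card_filter_le_s7 {M : Type*} [AddCommMonoid M] [LinearOrder M]
    [IsOrderedAddMonoid M] {s t : Multiset M} (ht : ∀ y ∈ t, 0 ≤ y)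
    (h : ∀ α ∈ s, (s.filter (α ≤ ·)).card ≤ (t.filter (α ≤ ·)).card) : s.sum ≤ t.sum := by
  classical
  induction s using Multiset.strongInductionOn generalizing t with
  | ih s ih =>
    rcases eq_or_ne s 0 with rfl | hs
    · simpa using Multiset.sum_nonneg ht
    obtain ⟨m, hm, hmax⟩ := Multiset.exists_max_image id hs
    -- the largest value of `s` is matched with some value of `t` that is at least as large
    obtain ⟨y, hy, hmy⟩ : ∃ y ∈ t, m ≤ y := by
      have : 0 < (t.filter (m ≤ ·)).card :=
        (Multiset.card_pos_iff_exists_mem.2 ⟨m, Multiset.mem_filter.2 ⟨hm, le_rfl⟩⟩).trans_le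
          (h m hm)
      obtain ⟨y, hy⟩ := Multiset.card_pos_iff_exists_mem.1 this
      exact ⟨y, Multiset.mem_filter.1 hy⟩
    rw [← Multiset.cons_erase hm, ← Multiset.cons_erase hy, Multiset.sum_cons,
      Multiset.sum_cons]
    refine add_le_add hmy (ih _ (Multiset.erase_lt.2 hm)
      (fun z hz => ht z (Multiset.mem_of_mem_erase hz)) fun α hα => ?_)
    have hαm : α ≤ m := hmax α (Multiset.mem_of_mem_erase hα)
    have := h α (Multiset.mem_of_mem_erase hα)
    rw [← Multiset.cons_erase hm, ← Multiset.cons_erase hy, Multiset.filter_cons_of_pos _ hαm,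
      Multiset.filter_cons_of_pos _ (hαm.trans hmy), Multiset.card_cons,
      Multiset.card_cons] at this
    exact Nat.le_of_add_le_add_right this

theorem Finset.card_filter_map_val_s7 {ι M : Type*} (S : Finset ι) (g : ι → M) (p : M → Prop)
    [DecidablePred p] : ((S.val.map g).filter p).card = #(S.filter (p ∘ g)) := by
  rw [Multiset.filter_map, Multiset.card_map]
  rfl

section NestedPartition

variable {ι β : Type*} [DecidableEq ι] [LinearOrder β]

structure IsNestedPartition (K : β → ι → Finset ι) : Prop where
  self_mem : ∀ α v, v ∈ K α v
  eq_of_mem : ∀ {α u v}, u ∈ K α v → K α u = K α v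
  anti : ∀ {α α'} v, α ≤ α' → K α' v ⊆ K α v

namespace IsNestedPartition

variable {K : β → ι → Finset ι} (hK : IsNestedPartition K) {A Y : Finset ι}
include hK

theorem exists_card_inter_lt {α α' : β} (hαα' : α ≤ α') {v : ι}
    (hlt : #(A ∩ K α v) < #(Y ∩ K α v)) :
    ∃ u ∈ K α v, #(A ∩ K α' u) < #(Y ∩ K α' u) := by
  have fiber : ∀ Z : Finset ι, ∀ u ∈ K α v,
      {a ∈ Z ∩ K α v | K α' a = K α' u} = Z ∩ K α' u := by
    intro Z u hu
    ext a
    simp only [mem_filter, mem_inter]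
    constructor
    · rintro ⟨⟨haZ, -⟩, ha⟩
      exact ⟨haZ, ha ▸ hK.self_mem α' a⟩
    · rintro ⟨haZ, ha⟩
      refine ⟨⟨haZ, ?_⟩, hK.eq_of_mem ha⟩
      rw [← hK.eq_of_mem hu]
      exact hK.anti u hαα' ha
  have split : ∀ Z : Finset ι, #(Z ∩ K α v) =
      ∑ P ∈ (K α v).image (K α'), #{a ∈ Z ∩ K α v | K α' a = P} := fun Z =>
    card_eq_sum_card_fiberwise fun a ha => mem_image_of_mem _ (mem_inter.1 ha).2
  rw [split A, split Y] at hlt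
  obtain ⟨P, hP, hPlt⟩ := exists_lt_of_sum_lt hlt
  obtain ⟨u, hu, rfl⟩ := mem_image.1 hP
  exact ⟨u, hu, by rwa [fiber A u hu, fiber Y u hu] at hPlt⟩

theorem exists_mem_forall_card_inter_lt (L : Finset β) {α : β} {v : ι}
    (hlt : #(A ∩ K α v) < #(Y ∩ K α v)) :
    ∃ j ∈ (Y \ A) ∩ K α v, ∀ α' ∈ L, α < α' → #(A ∩ K α' j) < #(Y ∩ K α' j) := by
  classical
  induction L using Finset.induction_on_min generalizing α v with
  | empty =>
    obtain ⟨j, hj, hjA⟩ := exists_mem_notMem_of_card_lt_card hlt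
    obtain ⟨hjY, hjK⟩ := mem_inter.1 hj
    exact ⟨j, mem_inter.2 ⟨mem_sdiff.2 ⟨hjY, fun h => hjA (mem_inter.2 ⟨h, hjK⟩)⟩, hjK⟩,
      fun _ h => absurd h (notMem_empty _)⟩
  | insert a s ha ih =>
    by_cases hαa : α < a
    · obtain ⟨u, hu, hltu⟩ := hK.exists_card_inter_lt hαa.le hlt
      obtain ⟨j, hj, hjs⟩ := ih hltu
      obtain ⟨hjYA, hjK⟩ := mem_inter.1 hj
      refine ⟨j, mem_inter.2 ⟨hjYA, ?_⟩, fun α' hα' hαα' => ?_⟩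
      · rw [← hK.eq_of_mem hu]
        exact hK.anti u hαa.le hjK
      rcases mem_insert.1 hα' with rfl | hα's
      · rwa [hK.eq_of_mem hjK]
      · exact hjs α' hα's (ha α' hα's)
    · obtain ⟨j, hj, hjs⟩ := ih hlt
      refine ⟨j, hj, fun α' hα' hαα' => ?_⟩
      rcases mem_insert.1 hα' with rfl | hα's
      · exact absurd hαα' hαa
      · exact hjs α' hα's hαα'

end IsNestedPartition

end NestedPartition

section Cluster

variable {ι M : Type*} [LinearOrder M]

def AntiUltrametric (Q : ι → ι → M) : Prop :=
  ∀ a b c, a ≠ c → c ≠ b → a ≠ b → min (Q a c) (Q c b) ≤ Q a b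

variable [Fintype ι] [DecidableEq ι] {Q : ι → ι → M}

def cluster (Q : ι → ι → M) (α : M) (v : ι) : Finset ι :=
  {u | u = v ∨ α ≤ Q v u}

theorem mem_cluster {α : M} {u v : ι} : u ∈ cluster Q α v ↔ u = v ∨ α ≤ Q v u := by
  simp [cluster]

theorem mem_cluster_of_le (hsymm : ∀ a b, Q a b = Q b a) (hQ : AntiUltrametric Q) {α : M}
    {u v w : ι} (huv : u ≠ v) (hα : α ≤ Q u v) (hw : w ∈ cluster Q α u) : w ∈ cluster Q α v := by
  rw [mem_cluster] at hw ⊢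
  by_cases hwv : w = v
  · exact Or.inl hwv
  obtain rfl | hwu := eq_or_ne w u
  · exact Or.inr (hsymm v w ▸ hα)
  · have hw : α ≤ Q u w := hw.resolve_left hwu
    exact Or.inr ((le_min (hsymm u v ▸ hα) hw).trans (hQ v w u (Ne.symm huv) (Ne.symm hwu) (Ne.symm hwv)))

theorem isNestedPartition_cluster (hsymm : ∀ a b, Q a b = Q b a) (hQ : AntiUltrametric Q) :
    IsNestedPartition (cluster Q) where
  self_mem α v := mem_cluster.2 (Or.inl rfl)
  eq_of_mem {α u v} hu := by
    obtain rfl | huv := eq_or_ne u v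
    · rfl
    have hvu : α ≤ Q v u := (mem_cluster.1 hu).resolve_left huv
    ext w
    exact ⟨mem_cluster_of_le hsymm hQ huv (hsymm v u ▸ hvu),
      mem_cluster_of_le hsymm hQ (Ne.symm huv) hvu⟩
  anti {α α'} v hαα' u hu := by
    rw [mem_cluster] at hu ⊢
    exact hu.imp_right hαα'.trans

theorem card_filter_map_val_eq_card_inter_cluster {S : Finset ι} {v : ι} (hv : v ∉ S) (α : M) :
    ((S.val.map (Q v)).filter (α ≤ ·)).card = #(S ∩ cluster Q α v) := by
  rw [card_filter_map_val_s7, filter_mem_eq_inter.symm]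
  congr 1
  ext u
  simp only [mem_filter, Function.comp_apply, mem_cluster]
  constructor
  · rintro ⟨hu, h⟩
    exact ⟨hu, Or.inr h⟩
  · rintro ⟨hu, rfl | h⟩
    · exact absurd hu hv
    · exact ⟨hu, h⟩

end Cluster

theorem Finset.sum_filter_lt_insert {ι M : Type*} [LinearOrder ι] [AddCommMonoid M]
    {F : ι → ι → M} (hF : ∀ a b, F a b = F b a) {S : Finset ι} {a : ι} (ha : a ∉ S) :
    ∑ p ∈ (insert a S ×ˢ insert a S).filter (fun p => p.1 < p.2), F p.1 p.2
      = ∑ p ∈ (S ×ˢ S).filter (fun p => p.1 < p.2), F p.1 p.2 + ∑ u ∈ S, F a u := by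
  simp only [sum_filter, sum_product, sum_insert ha, lt_irrefl, if_false, zero_add,
    sum_add_distrib]
  have hpair : ∀ u ∈ S, ((if a < u then F a u else 0) + if u < a then F u a else 0) = F a u := by
    intro u hu
    rcases lt_or_gt_of_ne (ne_of_mem_of_not_mem hu ha) with h | h
    · rw [if_neg h.not_gt, if_pos h, zero_add, hF]
    · rw [if_pos h, if_neg h.not_gt, add_zero]
  rw [← sum_congr rfl hpair, sum_add_distrib]
  abel

variable {n : ℕ} {Q : Fin n → Fin n → WithTop ℝ}

theorem quadF_zero_insert (hsymm : ∀ a b, Q a b = Q b a) {S : Finset (Fin n)} {a : Fin n}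
    (ha : a ∉ S) : quadF 0 Q (insert a S) = quadF 0 Q S + ∑ u ∈ S, Q a u := by
  simp only [quadF, Pi.zero_apply, WithTop.coe_zero, sum_const_zero, zero_add]
  exact sum_filter_lt_insert hsymm ha

section MnatConvexity

variable {n : ℕ} {Q : Fin n → Fin n → WithTop ℝ} {L : Finset (WithTop ℝ)}

theorem mem_of_mem_map_val_of_notMem (hL : ∀ a b, a ≠ b → Q a b ∈ L) {S : Finset (Fin n)} {v : Fin n}
    (hv : v ∉ S) {x : WithTop ℝ} (hx : x ∈ S.val.map (Q v)) : x ∈ L := by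
  obtain ⟨u, hu, rfl⟩ := Multiset.mem_map.1 hx
  exact hL v u fun h => hv (h ▸ hu)

theorem quadF_erase_add_insert_le (hsymm : ∀ a b, Q a b = Q b a)
    (hL : ∀ a b, a ≠ b → Q a b ∈ L) (hL0 : ∀ x ∈ L, 0 ≤ x) {A Y : Finset (Fin n)} {i : Fin n}
    (hiA : i ∉ A) (hiY : i ∉ Y) (h : ∀ α ∈ L, #(Y ∩ cluster Q α i) ≤ #(A ∩ cluster Q α i)) :
    quadF 0 Q A + quadF 0 Q (insert i Y) ≤ quadF 0 Q (insert i A) + quadF 0 Q Y := by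
  have key : ∑ u ∈ Y, Q i u ≤ ∑ u ∈ A, Q i u := by
    rw [sum_eq_multiset_sum, sum_eq_multiset_sum]
    refine Multiset.sum_le_sum_of_card_filter_le_s7
      (fun x hx => hL0 x (mem_of_mem_map_val_of_notMem hL hiA hx)) fun α hα => ?_
    rw [card_filter_map_val_eq_card_inter_cluster hiY,
      card_filter_map_val_eq_card_inter_cluster hiA]
    exact h α (mem_of_mem_map_val_of_notMem hL hiY hα)
  rw [quadF_zero_insert hsymm hiY, quadF_zero_insert hsymm hiA]
  convert add_le_add (le_refl (quadF 0 Q A + quadF 0 Q Y)) key using 1 <;> abel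

theorem exists_quadF_exchange_le (hsymm : ∀ a b, Q a b = Q b a) (hQ : AntiUltrametric Q)
    (hL : ∀ a b, a ≠ b → Q a b ∈ L) (hL0 : ∀ x ∈ L, 0 ≤ x) {A Y : Finset (Fin n)} {i : Fin n}
    (hiA : i ∉ A) (hiY : i ∉ Y) {β : WithTop ℝ}
    (hβ : #(A ∩ cluster Q β i) < #(Y ∩ cluster Q β i))
    (hmax : ∀ α ∈ L, β < α → #(Y ∩ cluster Q α i) ≤ #(A ∩ cluster Q α i)) :
    ∃ j ∈ Y \ insert i A, quadF 0 Q (insert j A) + quadF 0 Q ((insert i Y).erase j)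
      ≤ quadF 0 Q (insert i A) + quadF 0 Q Y := by
  have hK := isNestedPartition_cluster hsymm hQ
  obtain ⟨j, hj, hjdeep⟩ := hK.exists_mem_forall_card_inter_lt L hβ
  obtain ⟨hjYA, hjβ⟩ := mem_inter.1 hj
  obtain ⟨hjY, hjA⟩ := mem_sdiff.1 hjYA
  have hji : j ≠ i := ne_of_mem_of_not_mem hjY hiY
  have hβij : β ≤ Q i j := (mem_cluster.1 hjβ).resolve_left hji
  refine ⟨j, mem_sdiff.2 ⟨hjY, by simp [hji, hjA]⟩, ?_⟩
  obtain ⟨Y', hjY', rfl⟩ : ∃ Y', j ∉ Y' ∧ Y = insert j Y' :=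
    ⟨Y.erase j, notMem_erase j Y, (insert_erase hjY).symm⟩
  have hiY' : i ∉ Y' := fun h => hiY (mem_insert_of_mem h)
  have hcount : ∀ α ∈ L, #(A ∩ cluster Q α j) + #(Y' ∩ cluster Q α i)
      ≤ #(A ∩ cluster Q α i) + #(Y' ∩ cluster Q α j) := by
    intro α hαL
    by_cases hαβ : α ≤ β
    · have hjα : j ∈ cluster Q α i := mem_cluster.2 (Or.inr (hαβ.trans hβij))
      rw [hK.eq_of_mem hjα, add_comm]
    · have hdeep := hjdeep α hαL (lt_of_not_ge hαβ)
      have hshallow := hmax α hαL (lt_of_not_ge hαβ)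
      rw [insert_inter_of_mem (hK.self_mem α j),
        card_insert_of_notMem fun h => hjY' (mem_inter.1 h).1] at hdeep
      have hsub : #(Y' ∩ cluster Q α i) ≤ #(insert j Y' ∩ cluster Q α i) :=
        card_le_card (inter_subset_inter (subset_insert j Y') subset_rfl)
      omega
  have key : ∑ u ∈ A, Q j u + ∑ u ∈ Y', Q i u ≤ ∑ u ∈ A, Q i u + ∑ u ∈ Y', Q j u := by
    simp only [sum_eq_multiset_sum, ← Multiset.sum_add]
    refine Multiset.sum_le_sum_of_card_filter_le_s7 (fun x hx => ?_) fun α hα => ?_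
    · rcases Multiset.mem_add.1 hx with hx | hx
      exacts [hL0 x (mem_of_mem_map_val_of_notMem hL hiA hx), hL0 x (mem_of_mem_map_val_of_notMem hL hjY' hx)]
    · simp only [Multiset.filter_add, Multiset.card_add,
        card_filter_map_val_eq_card_inter_cluster hiA, card_filter_map_val_eq_card_inter_cluster hjA,
        card_filter_map_val_eq_card_inter_cluster hiY',
        card_filter_map_val_eq_card_inter_cluster hjY']
      rcases Multiset.mem_add.1 hα with hα | hα
      exacts [hcount α (mem_of_mem_map_val_of_notMem hL hjA hα), hcount α (mem_of_mem_map_val_of_notMem hL hiY' hα)]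
  rw [erase_insert_of_ne (Ne.symm hji), erase_insert hjY', quadF_zero_insert hsymm hjA,
    quadF_zero_insert hsymm hiY', quadF_zero_insert hsymm hiA, quadF_zero_insert hsymm hjY']
  convert add_le_add (le_refl (quadF 0 Q A + quadF 0 Q Y')) key using 1 <;> abel

theorem mnatConvex_quadF_of_antiUltrametric (hsymm : ∀ a b, Q a b = Q b a)
    (hnn : ∀ a b, a ≠ b → 0 ≤ Q a b) (hQ : AntiUltrametric Q) : MnatConvex (quadF 0 Q) := by
  set L : Finset (WithTop ℝ) := univ.offDiag.image fun p => Q p.1 p.2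
  have hL : ∀ a b, a ≠ b → Q a b ∈ L := fun a b hab =>
    mem_image.2 ⟨(a, b), mem_offDiag.2 ⟨mem_univ a, mem_univ b, hab⟩, rfl⟩
  have hL0 : ∀ x ∈ L, 0 ≤ x := by
    simp only [L, mem_image, mem_offDiag, mem_univ, true_and]
    rintro _ ⟨p, hp, rfl⟩
    exact hnn _ _ hp
  intro X Y i hi
  obtain ⟨hiX, hiY⟩ := mem_sdiff.1 hi
  obtain ⟨A, hiA, rfl⟩ : ∃ A, i ∉ A ∧ X = insert i A :=
    ⟨X.erase i, notMem_erase i X, (insert_erase hiX).symm⟩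
  rw [erase_insert hiA]
  by_cases h : ∃ α ∈ L, #(A ∩ cluster Q α i) < #(Y ∩ cluster Q α i)
  · right
    obtain ⟨β, hβ, hmax⟩ := exists_max_image (L.filter fun α =>
      #(A ∩ cluster Q α i) < #(Y ∩ cluster Q α i)) id (by simpa [Finset.Nonempty] using h)
    rw [mem_filter] at hβ
    refine exists_quadF_exchange_le hsymm hQ hL hL0 hiA hiY hβ.2 fun α hαL hβα => ?_
    by_contra hlt
    exact (hmax α (mem_filter.2 ⟨hαL, lt_of_not_ge hlt⟩)).not_gt hβα
  · push Not at h
    exact Or.inl (quadF_erase_add_insert_le hsymm hL hL0 hiA hiY h)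

end MnatConvexity

section Completion

variable {n : ℕ} (H : Fin n → Fin n → Option (WithTop ℝ)) {α β : WithTop ℝ} {i j : Fin n}

theorem AdjE.mono {H} (h : AdjE H α i j) (hβα : β ≤ α) : AdjE H β i j :=
  ⟨h.1, h.2.imp fun _ hc => ⟨hc.1, hβα.trans hc.2⟩⟩

theorem InV.mono {H} (h : InV H α i) (hβα : β ≤ α) : InV H β i :=
  h.imp fun _ hj => hj.mono hβα

theorem AdjS.mono {H} (h : AdjS H α i j) (hβα : β ≤ α) : AdjS H β i j :=
  ⟨h.1, h.2.1, h.2.2.1.mono hβα, h.2.2.2.1.mono hβα,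
    Relation.ReflTransGen.mono (fun _ _ he => he.mono hβα) _ _ h.2.2.2.2⟩

theorem AdjT.mono {H} (h : AdjT H α i j) (hβα : β ≤ α) : AdjT H β i j :=
  h.imp (fun he => he.mono hβα) fun hs => hs.mono hβα

variable {H}

theorem AdjE.symm (Hsymm : ∀ i j, H i j = H j i) (h : AdjE H α i j) : AdjE H α j i :=
  ⟨h.1.symm, Hsymm i j ▸ h.2⟩

theorem AdjS.symm (Hsymm : ∀ i j, H i j = H j i) (h : AdjS H α i j) : AdjS H α j i := by
  obtain ⟨hij, hnone, hi, hj, hpath⟩ := h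
  have : Std.Symm (AdjE H α) := ⟨fun _ _ he => he.symm Hsymm⟩
  exact ⟨hij.symm, Hsymm i j ▸ hnone, hj, hi, Relation.ReflTransGen.stdSymm.symm _ _ hpath⟩

theorem InV.of_transGen (Hsymm : ∀ i j, H i j = H j i)
    (h : Relation.TransGen (AdjE H α) i j) : InV H α i ∧ InV H α j := by
  obtain ⟨k, hik, -⟩ := Relation.TransGen.head'_iff.1 h
  obtain ⟨l, -, hlj⟩ := Relation.TransGen.tail'_iff.1 h
  exact ⟨⟨k, hik⟩, ⟨l, hlj.symm Hsymm⟩⟩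

/-- The smallest entry along a path is a defined value at whose level the path survives. -/
theorem exists_defVal_transGen (h : Relation.TransGen (AdjE H α) i j) :
    ∃ β, DefVal H β ∧ α ≤ β ∧ Relation.TransGen (AdjE H β) i j := by
  induction h with
  | single he =>
    obtain ⟨hne, c, hc, hαc⟩ := he
    exact ⟨c, ⟨_, _, hne, hc⟩, hαc, .single ⟨hne, c, hc, le_rfl⟩⟩
  | tail _ he ih =>
    obtain ⟨β, hβ, hαβ, hpath⟩ := ih
    obtain ⟨hne, c, hc, hαc⟩ := he
    refine ⟨min β c, ?_, le_min hαβ hαc,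
      .tail (Relation.TransGen.mono (fun _ _ h => h.mono (min_le_left β c)) _ _ hpath) ⟨hne, c, hc, min_le_right β c⟩⟩
    rcases min_choice β c with h | h <;> rw [h]
    exacts [hβ, ⟨_, _, hne, hc⟩]

theorem AdjS.exists_defVal (Hsymm : ∀ i j, H i j = H j i) (h : AdjS H α i j) :
    ∃ β, DefVal H β ∧ α ≤ β ∧ AdjS H β i j := by
  obtain ⟨hij, hnone, -, -, hpath⟩ := h
  obtain ⟨β, hβ, hαβ, hpathβ⟩ := exists_defVal_transGen
    ((Relation.reflTransGen_iff_eq_or_transGen.1 hpath).resolve_left hij.symm)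
  obtain ⟨hi, hj⟩ := InV.of_transGen Hsymm hpathβ
  exact ⟨β, hβ, hαβ, hij, hnone, hi, hj, hpathβ.to_reflTransGen⟩

variable (H)

open scoped Classical in
noncomputable def definedValues : Finset (WithTop ℝ) :=
  univ.offDiag.biUnion fun p => (H p.1 p.2).toFinset

open scoped Classical in
noncomputable def shortcutLevels (i j : Fin n) : Finset (WithTop ℝ) :=
  (definedValues H).filter fun β => AdjS H β i j

noncomputable def minDefinedValue : WithTop ℝ :=
  if h : (definedValues H).Nonempty then (definedValues H).min' h else 0

noncomputable def fillValue (i j : Fin n) : WithTop ℝ :=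
  if h : (shortcutLevels H i j).Nonempty then (shortcutLevels H i j).max' h
  else minDefinedValue H

noncomputable def completion (i j : Fin n) : WithTop ℝ :=
  (H i j).getD (fillValue H i j)

variable {H}

theorem mem_definedValues : β ∈ definedValues H ↔ DefVal H β := by
  simp [definedValues, DefVal]

theorem mem_shortcutLevels : β ∈ shortcutLevels H i j ↔ DefVal H β ∧ AdjS H β i j := by
  simp [shortcutLevels, mem_definedValues]

theorem minDefinedValue_le (h : DefVal H β) : minDefinedValue H ≤ β := by
  have hβ := mem_definedValues.2 h
  rw [minDefinedValue, dif_pos ⟨β, hβ⟩]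
  exact min'_le _ _ hβ

theorem defVal_minDefinedValue (h : ∃ β, DefVal H β) : DefVal H (minDefinedValue H) := by
  obtain ⟨β, hβ⟩ := h
  have hne : (definedValues H).Nonempty := ⟨β, mem_definedValues.2 hβ⟩
  rw [minDefinedValue, dif_pos hne, ← mem_definedValues]
  exact min'_mem _ hne

theorem minDefinedValue_nonneg (Hnn : ∀ i j a, i ≠ j → H i j = some a → 0 ≤ a) :
    0 ≤ minDefinedValue H := by
  by_cases h : ∃ β, DefVal H β
  · obtain ⟨_, _, hij, hval⟩ := defVal_minDefinedValue h
    exact Hnn _ _ _ hij hval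
  · rw [minDefinedValue, dif_neg fun ⟨β, hβ⟩ => h ⟨β, mem_definedValues.1 hβ⟩]

theorem isGreatest_fillValue (h : ∃ β, DefVal H β ∧ AdjS H β i j) :
    IsGreatest {β | DefVal H β ∧ AdjS H β i j} (fillValue H i j) := by
  obtain ⟨β, hβ⟩ := h
  have hne : (shortcutLevels H i j).Nonempty := ⟨β, mem_shortcutLevels.2 hβ⟩
  rw [fillValue, dif_pos hne]
  exact ⟨mem_shortcutLevels.1 (max'_mem _ hne),
    fun γ hγ => le_max' _ γ (mem_shortcutLevels.2 hγ)⟩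

theorem fillValue_of_not_exists (h : ¬∃ β, DefVal H β ∧ AdjS H β i j) :
    fillValue H i j = minDefinedValue H :=
  dif_neg fun ⟨β, hβ⟩ => h ⟨β, mem_shortcutLevels.1 hβ⟩

theorem completion_of_some {c : WithTop ℝ} (h : H i j = some c) : completion H i j = c := by
  simp [completion, h]

theorem completion_of_none (h : H i j = none) : completion H i j = fillValue H i j := by
  simp [completion, h]

theorem minDefinedValue_le_completion (hij : i ≠ j) : minDefinedValue H ≤ completion H i j := by
  cases hH : H i j with
  | some c => exact (completion_of_some hH).symm ▸ minDefinedValue_le ⟨i, j, hij, hH⟩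
  | none =>
    rw [completion_of_none hH]
    by_cases h : ∃ β, DefVal H β ∧ AdjS H β i j
    · exact minDefinedValue_le (isGreatest_fillValue h).1.1
    · exact (fillValue_of_not_exists h).ge

theorem completion_nonneg (Hnn : ∀ i j a, i ≠ j → H i j = some a → 0 ≤ a) (hij : i ≠ j) :
    0 ≤ completion H i j :=
  (minDefinedValue_nonneg Hnn).trans (minDefinedValue_le_completion hij)

theorem adjT_completion_or_eq (hij : i ≠ j) :
    AdjT H (completion H i j) i j ∨ completion H i j = minDefinedValue H := by
  cases hH : H i j with
  | some c => exact .inl (.inl ⟨hij, c, hH, (completion_of_some hH).le⟩)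
  | none =>
    rw [completion_of_none hH]
    by_cases h : ∃ β, DefVal H β ∧ AdjS H β i j
    · exact .inl (.inr (isGreatest_fillValue h).1.2)
    · exact .inr (fillValue_of_not_exists h)

theorem le_completion_of_adjT (Hsymm : ∀ i j, H i j = H j i) (h : AdjT H α i j) :
    α ≤ completion H i j := by
  rcases h with ⟨-, c, hc, hαc⟩ | hS
  · rwa [completion_of_some hc]
  · obtain ⟨β, hβ, hαβ, hSβ⟩ := hS.exists_defVal Hsymm
    rw [completion_of_none hS.2.1]
    exact hαβ.trans ((isGreatest_fillValue ⟨β, hβ, hSβ⟩).2 ⟨hβ, hSβ⟩)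

theorem completion_symm (Hsymm : ∀ i j, H i j = H j i) (i j : Fin n) :
    completion H i j = completion H j i := by
  have hS : shortcutLevels H i j = shortcutLevels H j i := by
    ext β
    simp only [mem_shortcutLevels]
    exact and_congr_right fun _ => ⟨(·.symm Hsymm), (·.symm Hsymm)⟩
  simp only [completion, fillValue, hS, Hsymm i j]

theorem antiUltrametric_completion (Hsymm : ∀ i j, H i j = H j i)
    (Hnn : ∀ i j a, i ≠ j → H i j = some a → 0 ≤ a)
    (hcomplete : ∀ α : WithTop ℝ, 0 ≤ α →
      ∀ i j : Fin n, Relation.ReflTransGen (AdjT H α) i j → i ≠ j → AdjT H α i j) :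
    AntiUltrametric (completion H) := by
  intro a b k hak hkb hab
  set m := min (completion H a k) (completion H k b)
  by_cases hm : m ≤ minDefinedValue H
  · exact hm.trans (minDefinedValue_le_completion hab)
  -- above the filler level, both entries are edges of `G̃_H^m`, whose components are cliques
  have hadj : ∀ {x y}, x ≠ y → m ≤ completion H x y → AdjT H m x y := fun hxy hle =>
    (adjT_completion_or_eq hxy).elim (·.mono hle) fun heq => absurd (heq ▸ hle) hm
  have hm0 : 0 ≤ m := le_min (completion_nonneg Hnn hak) (completion_nonneg Hnn hkb)
  exact le_completion_of_adjT Hsymm (hcomplete m hm0 a b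
    (.tail (.single (hadj hak (min_le_left _ _))) (hadj hkb (min_le_right _ _))) hab)

end Completion

theorem stmt7_general (n : ℕ) (H : Fin n → Fin n → Option (WithTop ℝ))
    (Hsymm : ∀ i j : Fin n, H i j = H j i)
    (Hnn : ∀ (i j : Fin n) (a : WithTop ℝ), i ≠ j → H i j = some a → 0 ≤ a)
    (hcomplete : ∀ α : WithTop ℝ, 0 ≤ α →
      ∀ i j : Fin n, Relation.ReflTransGen (AdjT H α) i j → i ≠ j → AdjT H α i j) :
    ∃ H' : Fin n → Fin n → WithTop ℝ,
      (∀ i j : Fin n, H' i j = H' j i) ∧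
      (∀ (i j : Fin n) (a : WithTop ℝ), i ≠ j → H i j = some a → H' i j = a) ∧
      (∃ h : Fin n → ℝ, MnatConvex (quadF h H')) ∧
      (∀ i j : Fin n, i ≠ j → H i j = none →
        ((∃ β : WithTop ℝ, DefVal H β ∧ AdjS H β i j) →
          DefVal H (H' i j) ∧ AdjS H (H' i j) i j ∧
            ∀ β : WithTop ℝ, DefVal H β → AdjS H β i j → β ≤ H' i j) ∧
        ((¬ ∃ β : WithTop ℝ, DefVal H β ∧ AdjS H β i j) →
          (∀ β : WithTop ℝ, DefVal H β → H' i j ≤ β) ∧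
          ((∃ β : WithTop ℝ, DefVal H β) → DefVal H (H' i j)))) := by
  refine ⟨completion H, completion_symm Hsymm, fun i j a _ h => completion_of_some h,
    ⟨0, mnatConvex_quadF_of_antiUltrametric (completion_symm Hsymm)
      (fun _ _ => completion_nonneg Hnn) (antiUltrametric_completion Hsymm Hnn hcomplete)⟩,
    fun i j _ hnone => ?_⟩
  rw [completion_of_none hnone]
  refine ⟨fun h => ?_, fun h => ?_⟩
  · obtain ⟨⟨hdef, hS⟩, hub⟩ := isGreatest_fillValue h
    exact ⟨hdef, hS, fun β hβ hβS => hub ⟨hβ, hβS⟩⟩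
  · rw [fillValue_of_not_exists h]
    exact ⟨fun β => minDefinedValue_le, defVal_minDefinedValue⟩

/-- Let `H` be a symmetric partial matrix whose defined entries lie in `ℝ₊ ∪ {+∞}` and
satisfy the anti-ultrametric inequality whenever all three entries of a triple are defined.
If for every `α ∈ ℝ₊ ∪ {+∞}` each connected component of `G̃_H^α = (V_H^α, E_H^α ∪ S_H^α)`
is complete, then `H` is M♮-convex completable; moreover one such completion `H'` assigns to
each undefined entry `h_{ij}` the largest value `α` among the defined entry values with
`{i,j} ∈ S_H^α`, and the smallest defined entry value to all remaining undefined entries. -/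
theorem stmt7 (n : ℕ) (H : Fin n → Fin n → Option (WithTop ℝ))
    (Hsymm : ∀ i j : Fin n, H i j = H j i)
    (Hnn : ∀ (i j : Fin n) (a : WithTop ℝ), i ≠ j → H i j = some a → 0 ≤ a)
    (Hanti : ∀ (i j k : Fin n) (a b c : WithTop ℝ), i ≠ j → j ≠ k → i ≠ k →
      H i j = some a → H j k = some b → H i k = some c → min b c ≤ a)
    (hcomplete : ∀ α : WithTop ℝ, 0 ≤ α →
      ∀ i j : Fin n, Relation.ReflTransGen (AdjT H α) i j → i ≠ j → AdjT H α i j) :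
    ∃ H' : Fin n → Fin n → WithTop ℝ,
      (∀ i j : Fin n, H' i j = H' j i) ∧
      (∀ (i j : Fin n) (a : WithTop ℝ), i ≠ j → H i j = some a → H' i j = a) ∧
      (∃ h : Fin n → ℝ, MnatConvex (quadF h H')) ∧
      (∀ i j : Fin n, i ≠ j → H i j = none →
        ((∃ β : WithTop ℝ, DefVal H β ∧ AdjS H β i j) →
          DefVal H (H' i j) ∧ AdjS H (H' i j) i j ∧
            ∀ β : WithTop ℝ, DefVal H β → AdjS H β i j → β ≤ H' i j) ∧
        ((¬ ∃ β : WithTop ℝ, DefVal H β ∧ AdjS H β i j) →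
          (∀ β : WithTop ℝ, DefVal H β → H' i j ≤ β) ∧
          ((∃ β : WithTop ℝ, DefVal H β) → DefVal H (H' i j)))) :=
  stmt7_general n H Hsymm Hnn hcomplete
end

section
/- Let n ≥ 1 and let f : {0,1}^n → ℝ ∪ {+∞} be the quadratic function f(x) = Σ_{i∈[n]} h_i x_i + Σ_{1≤i<j≤n} h_{ij} x_i x_j with finite h_i ∈ ℝ and symmetric h_{ij} ∈ ℝ ∪ {+∞}. Suppose h_{ij} ≥ min{h_{ik}, h_{jk}} for all distinct i, j, k and h_{ij} ≥ 0 for all distinct i, j. Then for all distinct i, j, k ∈ [n] and all z ∈ {0,1}^n with supp⁺(z) ⊆ [n] \ {i,j,k}: f(z + χ_i + χ_j) + f(z + χ_k) ≥ min{f(z + χ_j + χ_k) + f(z + χ_i), f(z + χ_i + χ_k) + f(z + χ_j)}; and for all distinct i, j ∈ [n] and all z ∈ {0,1}^n with supp⁺(z) ⊆ [n] \ {i,j}: f(z + χ_i + χ_j) + f(z) ≥ f(z + χ_i) + f(z + χ_j). -/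
/-
Adding a fresh element `i` to `S` raises `f` by the marginal gain `h_i + Σ_{t ∈ S} H i t`, so
adding two fresh elements `i, j` raises it by both gains plus the interaction `H i j`. Hence the
sides of each inequality are one common value plus a single interaction term (or plus nothing),
and the inequalities follow from `min (H j k) (H i k) ≤ H i j` and `0 ≤ H i j` by monotonicity of
addition alone, which survives the value `+∞`.
-/

open Finset

section LinearOrder

variable {α M : Type*} [LinearOrder α] [AddCommMonoid M] (f : α → α → M)

lemma sum_filter_lt_eq_sum_sum (S : Finset α) :
    ∑ p ∈ (S ×ˢ S).filter (fun p => p.1 < p.2), f p.1 p.2 =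
      ∑ a ∈ S, ∑ b ∈ S, if a < b then f a b else 0 := by
  rw [sum_filter, sum_product]

variable {f}

lemma ite_lt_add_ite_lt_of_ne (hf : ∀ a b, f a b = f b a) {a b : α} (hab : a ≠ b) :
    ((if a < b then f a b else 0) + if b < a then f b a else 0) = f a b := by
  rcases hab.lt_or_gt with hlt | hgt
  · rw [if_pos hlt, if_neg hlt.not_gt, add_zero]
  · rw [if_neg hgt.not_gt, if_pos hgt, zero_add, hf]

end LinearOrder

section QuadF

variable {n : ℕ} (h : Fin n → ℝ) (H : Fin n → Fin n → WithTop ℝ)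

def quadGain (i : Fin n) (S : Finset (Fin n)) : WithTop ℝ :=
  (h i : WithTop ℝ) + ∑ t ∈ S, H i t

variable {H}

lemma quadF_insert_s11 (Hsymm : ∀ i j : Fin n, H i j = H j i) {i : Fin n} {S : Finset (Fin n)}
    (hi : i ∉ S) : quadF h H (insert i S) = quadF h H S + quadGain h H i S := by
  set g : Fin n → Fin n → WithTop ℝ := fun a b => if a < b then H a b else 0
  have hcross : g i i + ∑ b ∈ S, g i b + ∑ a ∈ S, g a i = ∑ t ∈ S, H i t := by
    rw [show g i i = 0 from if_neg (lt_irrefl i), zero_add, ← sum_add_distrib]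
    exact sum_congr rfl fun t ht => ite_lt_add_ite_lt_of_ne Hsymm fun e => hi (e ▸ ht)
  unfold quadF quadGain
  simp only [sum_filter_lt_eq_sum_sum, sum_insert hi, sum_add_distrib]
  rw [← hcross]
  abel

lemma quadF_insert_insert (Hsymm : ∀ i j : Fin n, H i j = H j i) {i j : Fin n}
    {S : Finset (Fin n)} (hij : i ≠ j) (hi : i ∉ S) (hj : j ∉ S) :
    quadF h H (insert i (insert j S)) =
      quadF h H S + quadGain h H i S + quadGain h H j S + H i j := by
  have hi' : i ∉ insert j S := by simp [hij, hi]
  rw [quadF_insert_s11 h Hsymm hi', quadF_insert_s11 h Hsymm hj, quadGain, quadGain, quadGain,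
    sum_insert hj]
  abel

end QuadF

theorem stmt11_general (n : ℕ) (h : Fin n → ℝ) (H : Fin n → Fin n → WithTop ℝ)
    (Hsymm : ∀ i j : Fin n, H i j = H j i)
    (Hanti : ∀ i j k : Fin n, i ≠ j → j ≠ k → i ≠ k → min (H i k) (H j k) ≤ H i j)
    (Hnn : ∀ i j : Fin n, i ≠ j → 0 ≤ H i j) :
    (∀ i j k : Fin n, i ≠ j → j ≠ k → i ≠ k →
      ∀ z : Finset (Fin n), i ∉ z → j ∉ z → k ∉ z →
        min (quadF h H (insert j (insert k z)) + quadF h H (insert i z))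
            (quadF h H (insert i (insert k z)) + quadF h H (insert j z)) ≤
          quadF h H (insert i (insert j z)) + quadF h H (insert k z)) ∧
    (∀ i j : Fin n, i ≠ j → ∀ z : Finset (Fin n), i ∉ z → j ∉ z →
      quadF h H (insert i z) + quadF h H (insert j z) ≤
        quadF h H (insert i (insert j z)) + quadF h H z) := by
  refine ⟨fun i j k hij hjk hik z hi hj hk => ?_, fun i j hij z hi hj => ?_⟩
  · set C := quadF h H z + quadF h H z + quadGain h H i z + quadGain h H j z +
      quadGain h H k z with hC
    have eq_jk : quadF h H (insert j (insert k z)) + quadF h H (insert i z) = C + H j k := by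
      rw [quadF_insert_insert h Hsymm hjk hj hk, quadF_insert_s11 h Hsymm hi, hC]; abel
    have eq_ik : quadF h H (insert i (insert k z)) + quadF h H (insert j z) = C + H i k := by
      rw [quadF_insert_insert h Hsymm hik hi hk, quadF_insert_s11 h Hsymm hj, hC]; abel
    have eq_ij : quadF h H (insert i (insert j z)) + quadF h H (insert k z) = C + H i j := by
      rw [quadF_insert_insert h Hsymm hij hi hj, quadF_insert_s11 h Hsymm hk, hC]; abel
    rw [eq_jk, eq_ik, eq_ij, min_add_add_left, min_comm]
    exact add_le_add_right (Hanti i j k hij hjk hik) C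
  · rw [quadF_insert_insert h Hsymm hij hi hj, quadF_insert_s11 h Hsymm hi, quadF_insert_s11 h Hsymm hj]
    calc quadF h H z + quadGain h H i z + (quadF h H z + quadGain h H j z)
        = quadF h H z + quadGain h H i z + quadGain h H j z + quadF h H z := by abel
      _ ≤ quadF h H z + quadGain h H i z + quadGain h H j z + H i j + quadF h H z :=
        add_le_add_left (le_add_of_nonneg_right (Hnn i j hij)) _

/-- If the quadratic coefficients satisfy the anti-ultrametric property and are nonnegative,
then the quadratic function `f` satisfies, for all distinct `i, j, k` and every `z` with
`supp⁺(z) ⊆ [n] \ {i,j,k}`,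
`f(z+χ_i+χ_j) + f(z+χ_k) ≥ min{f(z+χ_j+χ_k) + f(z+χ_i), f(z+χ_i+χ_k) + f(z+χ_j)}`, and for all
distinct `i, j` and every `z` with `supp⁺(z) ⊆ [n] \ {i,j}`,
`f(z+χ_i+χ_j) + f(z) ≥ f(z+χ_i) + f(z+χ_j)`. -/
theorem stmt11 (n : ℕ) (hn : 1 ≤ n) (h : Fin n → ℝ) (H : Fin n → Fin n → WithTop ℝ)
    (Hsymm : ∀ i j : Fin n, H i j = H j i)
    (Hanti : ∀ i j k : Fin n, i ≠ j → j ≠ k → i ≠ k → min (H i k) (H j k) ≤ H i j)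
    (Hnn : ∀ i j : Fin n, i ≠ j → 0 ≤ H i j) :
    (∀ i j k : Fin n, i ≠ j → j ≠ k → i ≠ k →
      ∀ z : Finset (Fin n), i ∉ z → j ∉ z → k ∉ z →
        min (quadF h H (insert j (insert k z)) + quadF h H (insert i z))
            (quadF h H (insert i (insert k z)) + quadF h H (insert j z)) ≤
          quadF h H (insert i (insert j z)) + quadF h H (insert k z)) ∧
    (∀ i j : Fin n, i ≠ j → ∀ z : Finset (Fin n), i ∉ z → j ∉ z →
      quadF h H (insert i z) + quadF h H (insert j z) ≤
        quadF h H (insert i (insert j z)) + quadF h H z) :=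
  stmt11_general n h H Hsymm Hanti Hnn
end
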